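/- For the Petersen graph P, the outer mutual-visibility number satisfies μ_o(P) = 4. -/

import Mathlib

namespace MutualVisibility

open SimpleGraph

variable {V W : Type*}

/-- `x` and `y` are `X`-visible in `G`: there is a shortest `x,y`-path all of whose
internal vertices avoid `X`. -/
def Visible (G : SimpleGraph V) (X : Set V) (x y : V) : Prop :=
  ∃ p : G.Walk x y, p.length = G.dist x y ∧ ∀ v ∈ p.support, v ≠ x → v ≠ y → v ∉ X

/-- `X` is a mutual-visibility set: any two vertices of `X` are `X`-visible. -/
def IsMutualVisSet (G : SimpleGraph V) (X : Set V) : Prop :=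
  ∀ x ∈ X, ∀ y ∈ X, Visible G X x y

/-- outer mutual-visibility set -/
def IsOuterMutualVisSet (G : SimpleGraph V) (X : Set V) : Prop :=
  IsMutualVisSet G X ∧ ∀ x ∈ X, ∀ y ∉ X, Visible G X x y

/-- dual mutual-visibility set -/
def IsDualMutualVisSet (G : SimpleGraph V) (X : Set V) : Prop :=
  IsMutualVisSet G X ∧ ∀ x ∉ X, ∀ y ∉ X, Visible G X x y

/-- total mutual-visibility set -/
def IsTotalMutualVisSet (G : SimpleGraph V) (X : Set V) : Prop :=
  ∀ x y : V, Visible G X x y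

/-- mutual-visibility number μ(G) -/
noncomputable def mu (G : SimpleGraph V) : ℕ :=
  sSup {k | ∃ X : Set V, IsMutualVisSet G X ∧ X.ncard = k}

/-- outer mutual-visibility number μ_o(G) -/
noncomputable def muOuter (G : SimpleGraph V) : ℕ :=
  sSup {k | ∃ X : Set V, IsOuterMutualVisSet G X ∧ X.ncard = k}

/-- dual mutual-visibility number μ_d(G) -/
noncomputable def muDual (G : SimpleGraph V) : ℕ :=
  sSup {k | ∃ X : Set V, IsDualMutualVisSet G X ∧ X.ncard = k}

/-- total mutual-visibility number μ_t(G) -/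
noncomputable def muTotal (G : SimpleGraph V) : ℕ :=
  sSup {k | ∃ X : Set V, IsTotalMutualVisSet G X ∧ X.ncard = k}

/-- `H` contains a subgraph copy of `F`. -/
def ContainsCopy (F : SimpleGraph W) (H : SimpleGraph V) : Prop :=
  ∃ f : W → V, Function.Injective f ∧ ∀ a b, F.Adj a b → H.Adj (f a) (f b)

/-- The Turán number ex(n; F): max number of edges of an `n`-vertex graph with no copy of `F`. -/
noncomputable def exNum (n : ℕ) (F : SimpleGraph W) : ℕ :=
  sSup {k | ∃ H : SimpleGraph (Fin n), ¬ ContainsCopy F H ∧ H.edgeSet.ncard = k}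

/-- The direct (tensor/categorical) product of graphs. -/
def directProd (G : SimpleGraph V) (H : SimpleGraph W) : SimpleGraph (V × W) where
  Adj x y := G.Adj x.1 y.1 ∧ H.Adj x.2 y.2
  symm.symm := fun _ _ h => ⟨h.1.symm, h.2.symm⟩
  loopless.irrefl := fun x h => G.loopless.irrefl x.1 h.1

/-- The join `G + H` of two graphs. -/
def graphJoin (G : SimpleGraph V) (H : SimpleGraph W) : SimpleGraph (V ⊕ W) where
  Adj u v := match u, v with
    | Sum.inl a, Sum.inl b => G.Adj a b
    | Sum.inr a, Sum.inr b => H.Adj a b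
    | _, _ => True
  symm.symm u v := match u, v with
    | Sum.inl _, Sum.inl _ => fun h => G.adj_symm h
    | Sum.inr _, Sum.inr _ => fun h => H.adj_symm h
    | Sum.inl _, Sum.inr _ => fun _ => trivial
    | Sum.inr _, Sum.inl _ => fun _ => trivial
  loopless.irrefl := fun u => match u with
    | Sum.inl a => G.loopless.irrefl a
    | Sum.inr a => H.loopless.irrefl a

/-- A big-μ graph: `G = (K_1 ∪ K_t) + H` for some `t ≥ 0` and some graph `H`. -/
def IsBigMu {V : Type} (G : SimpleGraph V) : Prop :=
  ∃ (t : ℕ) (W : Type) (H : SimpleGraph W),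
    Nonempty (G ≃g graphJoin ((⊤ : SimpleGraph (Fin 1)) ⊕g (⊤ : SimpleGraph (Fin t))) H)

/-- A cograph: a graph with no induced path on four vertices. -/
def IsCograph (G : SimpleGraph V) : Prop :=
  ¬ ∃ f : Fin 4 → V, Function.Injective f ∧
      ∀ a b, (pathGraph 4).Adj a b ↔ G.Adj (f a) (f b)

/-- The Petersen graph, realized as the Kneser graph K(5,2). -/
def petersen : SimpleGraph {s : Finset (Fin 5) // s.card = 2} where
  Adj a b := Disjoint a.1 b.1
  symm.symm := fun _ _ h => h.symm
  loopless.irrefl := by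
    rintro ⟨s, hs⟩ h
    rw [disjoint_self, Finset.bot_eq_empty] at h
    subst h
    simp at hs


/-! If `x, y ∈ X` are adjacent in a graph of girth at least 5 and minimum degree at least 2, pick
a neighbour `z ≠ x` of `y`: then `y` is the unique common neighbour of `x` and `z`, so `x` and `z`
are not `X`-visible. Hence outer mutual-visibility sets of the Petersen graph are independent, and
they have at most 4 vertices because the pairs `{i, i + 1}` of `ℤ/5` span a 5-cycle and so do the
other five pairs. The four vertices containing `0` attain the bound: a vertex at distance two from
one of them meets it, so their common neighbour is disjoint from both and avoids `0`. -/

section Visibility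

variable {G : SimpleGraph V} {X : Set V} {x y z : V}

theorem _root_.SimpleGraph.dist_eq_two_iff :
    G.dist x y = 2 ↔ x ≠ y ∧ ¬ G.Adj x y ∧ (G.commonNeighbors x y).Nonempty := by
  rw [SimpleGraph.dist, ENat.toNat_eq_iff two_ne_zero, ← edist_eq_two_iff]
  rfl

theorem visible_self : Visible G X x x :=
  ⟨.nil, by simp, by simp⟩

theorem visible_of_adj (h : G.Adj x y) : Visible G X x y :=
  ⟨h.toWalk, by simp [dist_eq_one_iff_adj.2 h], by simp +contextual [Walk.support_cons]⟩

theorem visible_iff_of_dist_eq_two (h : G.dist x y = 2) :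
    Visible G X x y ↔ ∃ z, G.Adj x z ∧ G.Adj z y ∧ z ∉ X := by
  constructor
  · rintro ⟨p, hp, hX⟩
    rw [h] at hp
    match p, hp, hX with
    | .cons hxz (.cons hzy .nil), _, hX => exact ⟨_, hxz, hzy, hX _ (by simp) hxz.ne.symm hzy.ne⟩
  · rintro ⟨z, hxz, hzy, hz⟩
    refine ⟨.cons hxz (.cons hzy .nil), by simp [h], ?_⟩
    simp only [Walk.support_cons, Walk.support_nil, List.mem_cons]
    rintro v (rfl | rfl | rfl | h) <;> simp_all

theorem visible_of_adj_of_adj (hxz : G.Adj x z) (hzy : G.Adj z y) (hz : z ∉ X) :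
    Visible G X x y := by
  by_cases hxy : x = y
  · exact hxy ▸ visible_self
  by_cases hadj : G.Adj x y
  · exact visible_of_adj hadj
  have h : G.dist x y = 2 :=
    dist_eq_two_iff.2 ⟨hxy, hadj, z, G.mem_commonNeighbors.2 ⟨hxz, hzy.symm⟩⟩
  exact (visible_iff_of_dist_eq_two h).2 ⟨z, hxz, hzy, hz⟩

theorem isOuterMutualVisSet_iff :
    IsOuterMutualVisSet G X ↔ ∀ x ∈ X, ∀ y, Visible G X x y := by
  refine ⟨fun hX x hx y => ?_, fun h => ⟨fun x hx y _ => h x hx y, fun x hx y _ => h x hx y⟩⟩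
  by_cases hy : y ∈ X
  exacts [hX.1 x hx y hy, hX.2 x hx y hy]

theorem IsOuterMutualVisSet.isIndepSet (h₃ : G.CliqueFree 3)
    (h₄ : ∀ x y, x ≠ y → (G.commonNeighbors x y).Subsingleton)
    (hδ : ∀ v, (G.neighborSet v).Nontrivial) (hX : IsOuterMutualVisSet G X) :
    G.IsIndepSet X := by
  classical
  intro x hx y hy _ hxy
  obtain ⟨z, hyz : G.Adj y z, hzx⟩ := (hδ y).exists_ne x
  have hxz : ¬ G.Adj x z := fun hxz => h₃ {x, y, z} (is3Clique_triple_iff.2 ⟨hxy, hxz, hyz⟩)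
  have hy_common : y ∈ G.commonNeighbors x z := G.mem_commonNeighbors.2 ⟨hxy, hyz.symm⟩
  have hdist : G.dist x z = 2 := dist_eq_two_iff.2 ⟨hzx.symm, hxz, y, hy_common⟩
  obtain ⟨w, hxw, hwz, hw⟩ :=
    (visible_iff_of_dist_eq_two hdist).1 (isOuterMutualVisSet_iff.1 hX x hx z)
  have hwy : w = y := h₄ x z hzx.symm (G.mem_commonNeighbors.2 ⟨hxw, hwz.symm⟩) hy_common
  exact hw (hwy ▸ hy)

theorem _root_.SimpleGraph.IsIndepSet.ncard_inter_le_two {S : Set V} (hX : G.IsIndepSet X)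
    (hS : ∀ a ∈ S, ∀ b ∈ S, ∀ c ∈ S, a ≠ b → a ≠ c → b ≠ c → G.Adj a b ∨ G.Adj a c ∨ G.Adj b c) :
    (X ∩ S).ncard ≤ 2 := by
  by_contra! h
  obtain ⟨a, b, c, ha, hb, hc, hab, hac, hbc⟩ :=
    (Set.two_lt_ncard_iff (Set.finite_of_ncard_pos (by omega))).1 h
  rcases hS a ha.2 b hb.2 c hc.2 hab hac hbc with h | h | h
  exacts [hX ha.1 hb.1 hab h, hX ha.1 hc.1 hac h, hX hb.1 hc.1 hbc h]

end Visibility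

abbrev PetersenVertex := {s : Finset (Fin 5) // s.card = 2}

instance : DecidableRel petersen.Adj := fun a b => inferInstanceAs (Decidable (Disjoint a.1 b.1))

theorem petersen_cliqueFree_three : petersen.CliqueFree 3 := by
  have hK₃ : ∀ a b c : PetersenVertex,
      petersen.Adj a b → petersen.Adj a c → ¬ petersen.Adj b c := by decide
  intro s hs
  obtain ⟨a, b, c, hab, hac, hbc, rfl⟩ := is3Clique_iff.1 hs
  exact hK₃ a b c hab hac hbc

theorem petersen_commonNeighbors_subsingleton (x y : PetersenVertex) (hxy : x ≠ y) :
    (petersen.commonNeighbors x y).Subsingleton := by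
  have hC₄ : ∀ x y u v : PetersenVertex, x ≠ y → petersen.Adj x u → petersen.Adj y u →
      petersen.Adj x v → petersen.Adj y v → u = v := by decide
  intro u hu v hv
  rw [mem_commonNeighbors] at hu hv
  exact hC₄ x y u v hxy hu.1 hu.2 hv.1 hv.2

theorem petersen_neighborSet_nontrivial (v : PetersenVertex) :
    (petersen.neighborSet v).Nontrivial := by
  have h : ∀ v : PetersenVertex, ∃ a b, petersen.Adj v a ∧ petersen.Adj v b ∧ a ≠ b := by decide
  obtain ⟨a, b, ha, hb, hab⟩ := h v
  exact ⟨a, ha, b, hb, hab⟩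

theorem petersen_isOuterMutualVisSet_star :
    IsOuterMutualVisSet petersen {v : PetersenVertex | 0 ∈ v.1} := by
  have h : ∀ x y : PetersenVertex, 0 ∈ x.1 → x = y ∨ petersen.Adj x y ∨
      ∃ z, petersen.Adj x z ∧ petersen.Adj z y ∧ 0 ∉ z.1 := by decide
  refine isOuterMutualVisSet_iff.2 fun x hx y => ?_
  rcases h x y hx with rfl | hxy | ⟨z, hxz, hzy, hz⟩
  exacts [visible_self, visible_of_adj hxy, visible_of_adj_of_adj hxz hzy hz]

theorem petersen_ncard_star : {v : PetersenVertex | 0 ∈ v.1}.ncard = 4 := by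
  rw [Set.ncard_eq_toFinset_card']
  decide

set_option synthInstance.maxSize 2000 in
theorem petersen_isIndepSet_ncard_le {X : Set PetersenVertex} (hX : petersen.IsIndepSet X) :
    X.ncard ≤ 4 := by
  obtain ⟨C, hC, hCc⟩ : ∃ C : Set PetersenVertex,
      (∀ a ∈ C, ∀ b ∈ C, ∀ c ∈ C, a ≠ b → a ≠ c → b ≠ c →
        petersen.Adj a b ∨ petersen.Adj a c ∨ petersen.Adj b c) ∧
      (∀ a ∈ Cᶜ, ∀ b ∈ Cᶜ, ∀ c ∈ Cᶜ, a ≠ b → a ≠ c → b ≠ c →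
        petersen.Adj a b ∨ petersen.Adj a c ∨ petersen.Adj b c) :=
    ⟨{v | ∃ i : Fin 5, v.1 = {i, i + 1}}, by decide, by decide⟩
  calc X.ncard = (X ∩ C).ncard + (X ∩ Cᶜ).ncard :=
        (Set.ncard_inter_add_ncard_sdiff_eq_ncard X C).symm
    _ ≤ 2 + 2 := add_le_add (hX.ncard_inter_le_two hC) (hX.ncard_inter_le_two hCc)

theorem muOuter_petersen : muOuter petersen = 4 := by
  refine IsGreatest.csSup_eq ⟨⟨_, petersen_isOuterMutualVisSet_star, petersen_ncard_star⟩, ?_⟩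
  rintro k ⟨X, hX, rfl⟩
  exact petersen_isIndepSet_ncard_le <| hX.isIndepSet petersen_cliqueFree_three
    petersen_commonNeighbors_subsingleton petersen_neighborSet_nontrivial
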